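/- arXiv:2112.00397 — 3 statements merged into one kernel-verified Lean document; each statement's English description precedes it below -/
import Mathlib

section
/- Let G be a group, χ : G → ℝ a homomorphism with χ(g₀) < 0 for some g₀ ∈ G. Then RG is the direct limit (union) of the left RG_χ-submodules RG_χ · g₀^k for k ∈ ℤ, and each RG_χ · g₀^k is isomorphic as a left RG_χ-module to RG_χ (via right multiplication by g₀^{-k}). -/
/-- The submonoid `G_χ = {g ∈ G : χ(g) ≥ 0}` associated with a character `χ : G → ℝ`. -/
def Gchi {G : Type*} [Group G] (χ : G → ℝ)
    (hχ : ∀ a b : G, χ (a * b) = χ a + χ b) : Submonoid G where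
  carrier := {g | 0 ≤ χ g}
  one_mem' := by
    have h := hχ 1 1
    simp only [one_mul] at h
    simp only [Set.mem_setOf_eq]
    linarith
  mul_mem' := by
    intro a b ha hb
    simp only [Set.mem_setOf_eq] at *
    rw [hχ]
    linarith

/-- The inclusion `RG_χ → RG` of the monoid ring of `G_χ` into the group ring of `G`. -/
noncomputable def inclGchi {R G : Type*} [Ring R] [Group G] (χ : G → ℝ)
    (hχ : ∀ a b : G, χ (a * b) = χ a + χ b) :
    MonoidAlgebra R ↥(Gchi χ hχ) →+* MonoidAlgebra R G :=
  MonoidAlgebra.mapDomainRingHom R (Gchi χ hχ).subtype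

/-- The map `RG_χ → RG`, `α ↦ α · g₀^k`, whose image is the `RG_χ`-submodule
`RG_χ · g₀^k` of `RG`. -/
noncomputable def muGchi {R G : Type*} [Ring R] [Group G] (χ : G → ℝ)
    (hχ : ∀ a b : G, χ (a * b) = χ a + χ b) (g₀ : G) (k : ℤ)
    (α : MonoidAlgebra R ↥(Gchi χ hχ)) : MonoidAlgebra R G :=
  inclGchi χ hχ α * MonoidAlgebra.of R G (g₀ ^ k)

open Finsupp in
private theorem mapDomain_subtype' {R G : Type*} [Ring R] [Group G] (p : G → Prop)
    [DecidablePred p] (y : G →₀ R) (h : ∀ g ∈ y.support, p g) :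
    Finsupp.mapDomain (Subtype.val : {x // p x} → G) (Finsupp.subtypeDomain p y) = y := by
  ext g
  by_cases hg : p g
  · have := Finsupp.mapDomain_apply Subtype.val_injective (subtypeDomain p y) ⟨g, hg⟩
    simpa using this
  · rw [Finsupp.mapDomain_notin_range]
    · exact (by_contra fun h0 => hg (h g (Finsupp.mem_support_iff.2
        (Ne.symm (fun e => h0 e.symm)))) : y g = 0).symm
    · rintro ⟨⟨a, ha⟩, rfl⟩; exact hg ha

private theorem chi_zpow {G : Type*} [Group G] (χ : G → ℝ)
    (hχ : ∀ a b : G, χ (a * b) = χ a + χ b) (g : G) (n : ℤ) :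
    χ (g ^ n) = n * χ g := by
  have h1 : χ 1 = 0 := by have := hχ 1 1; simp at this; linarith
  let φ : G →* Multiplicative ℝ :=
    { toFun := fun g => Multiplicative.ofAdd (χ g)
      map_one' := by simp [h1]
      map_mul' := fun a b => by simp [hχ] }
  have := map_zpow φ g n
  have h2 : Multiplicative.toAdd (φ (g ^ n)) = Multiplicative.toAdd (φ g ^ n) :=
    congrArg _ this
  simpa [φ, toAdd_zpow, zsmul_eq_mul] using h2
/-- Let `χ : G → ℝ` be a character with `χ(g₀) < 0` for some `g₀ ∈ G`.  Then `RG` is the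
directed union of the left `RG_χ`-submodules `RG_χ · g₀^k` (`k ∈ ℤ`), ordered by inclusion
for `k ≤ l`, and each `RG_χ · g₀^k` is isomorphic to `RG_χ` as a left `RG_χ`-module: the
map `α ↦ α g₀^k` is injective, additive and `RG_χ`-linear (its inverse being right
multiplication by `g₀^{-k}`). -/

theorem groupRing_directed_union_of_translates {R G : Type*} [Ring R] [Group G]
    (χ : G → ℝ) (hχ : ∀ a b : G, χ (a * b) = χ a + χ b)
    (g₀ : G) (hneg : χ g₀ < 0) :
    (∀ k l : ℤ, k ≤ l →
      Set.range (muGchi (R := R) χ hχ g₀ k) ⊆ Set.range (muGchi (R := R) χ hχ g₀ l)) ∧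
    (⋃ k : ℤ, Set.range (muGchi (R := R) χ hχ g₀ k)) = Set.univ ∧
    (∀ k : ℤ,
      Function.Injective (muGchi (R := R) χ hχ g₀ k) ∧
      (∀ α β, muGchi (R := R) χ hχ g₀ k (α + β) =
        muGchi χ hχ g₀ k α + muGchi χ hχ g₀ k β) ∧
      (∀ (β α : MonoidAlgebra R ↥(Gchi χ hχ)),
        muGchi χ hχ g₀ k (β * α) = inclGchi χ hχ β * muGchi χ hχ g₀ k α)) := by
  classical
  have hof : ∀ a b : G, MonoidAlgebra.of R G a * MonoidAlgebra.of R G b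
      = MonoidAlgebra.of R G (a * b) := fun a b => (map_mul _ _ _).symm
  have hincl_of : ∀ g : ↥(Gchi χ hχ), inclGchi (R := R) χ hχ (MonoidAlgebra.of R _ g)
      = MonoidAlgebra.of R G ↑g := by
    intro g
    show MonoidAlgebra.mapDomain _ (MonoidAlgebra.single g (1 : R)) = _
    simp [MonoidAlgebra.mapDomain_single]
  refine ⟨?_, ?_, ?_⟩
  · rintro k l hkl x ⟨α, rfl⟩
    have hmem : g₀ ^ (k - l) ∈ Gchi χ hχ := by
      show 0 ≤ χ (g₀ ^ (k - l))
      rw [chi_zpow χ hχ]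
      have hkl0 : k - l ≤ 0 := by omega
      have hkl' : ((k - l : ℤ) : ℝ) ≤ 0 := by exact_mod_cast hkl0
      nlinarith
    refine ⟨α * MonoidAlgebra.of R _ (⟨g₀ ^ (k - l), hmem⟩ : ↥(Gchi χ hχ)), ?_⟩
    unfold muGchi
    rw [map_mul, hincl_of, mul_assoc, hof]
    congr 2
    group
  · rw [Set.eq_univ_iff_forall]
    intro x
    -- choose k large such that for all g in support of x, χ g - k * χ g₀ ≥ 0
    obtain ⟨k, hk⟩ : ∃ k : ℤ, ∀ g ∈ x.coeff.support, 0 ≤ χ g - (k:ℝ) * χ g₀ := by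
      by_cases hx : x.coeff.support.Nonempty
      · obtain ⟨g₁, hg₁, hmin⟩ := x.coeff.support.exists_min_image χ hx
        obtain ⟨k, hk⟩ := exists_int_gt (χ g₁ / χ g₀)
        refine ⟨k, fun g hg => ?_⟩
        have h1 : χ g₁ ≤ χ g := hmin g hg
        have h2 : (k:ℝ) * χ g₀ ≤ χ g₁ := ((div_lt_iff_of_neg hneg).mp hk).le
        linarith
      · exact ⟨0, fun g hg => absurd ⟨g, hg⟩ hx⟩
    refine Set.mem_iUnion.2 ⟨k, ?_⟩
    set y : MonoidAlgebra R G := x * MonoidAlgebra.of R G (g₀ ^ (-k)) with hy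
    have hsupp : ∀ g ∈ y.coeff.support, g ∈ Gchi χ hχ := by
      intro g hg
      have : y = x * MonoidAlgebra.single (g₀ ^ (-k)) (1:R) := rfl
      rw [this] at hg
      have h2 := MonoidAlgebra.support_coeff_mul_single_subset x (1:R) (g₀ ^ (-k)) hg
      simp only [Finset.mem_image, Finsupp.mem_support_iff] at h2
      obtain ⟨a, ha, rfl⟩ := h2
      show 0 ≤ χ (a * g₀ ^ (-k))
      rw [hχ, chi_zpow χ hχ]
      have := hk a (Finsupp.mem_support_iff.2 ha)
      push_cast
      linarith
    refine ⟨MonoidAlgebra.ofCoeff (Finsupp.subtypeDomain (· ∈ Gchi χ hχ) y.coeff), ?_⟩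
    unfold muGchi
    have : inclGchi (R := R) χ hχ (MonoidAlgebra.ofCoeff (Finsupp.subtypeDomain (· ∈ Gchi χ hχ) y.coeff)) = y :=
      congrArg MonoidAlgebra.ofCoeff (mapDomain_subtype' _ y.coeff hsupp)
    rw [this, hy, mul_assoc, hof]
    have h1 : g₀ ^ (-k) * g₀ ^ k = 1 := by group
    rw [h1, map_one, mul_one]
  · intro k
    have hrinv : ∀ z : MonoidAlgebra R G,
        z * MonoidAlgebra.of R G (g₀ ^ k) * MonoidAlgebra.of R G (g₀ ^ (-k)) = z := by
      intro z
      have h1 : g₀ ^ k * g₀ ^ (-k) = 1 := by group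
      rw [mul_assoc, hof, h1, map_one, mul_one]
    refine ⟨?_, ?_, ?_⟩
    · intro α β h
      unfold muGchi at h
      have h2 : inclGchi (R := R) χ hχ α = inclGchi χ hχ β := by
        rw [← hrinv (inclGchi χ hχ α), ← hrinv (inclGchi χ hχ β), h]
      have hinj : Function.Injective (inclGchi (R := R) χ hχ) :=
        MonoidAlgebra.mapDomain_injective Subtype.val_injective
      exact hinj h2
    · intro α β
      unfold muGchi
      rw [map_add, add_mul]
    · intro β α
      unfold muGchi
      rw [map_mul, mul_assoc]
end

section
/- Let G be a locally indicable group with Hughes-free division ring D_FG and N ⊴ G a normal subgroup. Then the subring R of D_FG generated by D_FN and the image of FG is a crossed product D_FN * (G/N): R decomposes as a direct sum ⊕_{i} D_FN · φ(t_i) over a transversal {t_i} of N in G, making R a (G/N)-graded ring with a unit in each graded piece. -/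
/-!
Strong Hughes-freeness applied to `H = G` says precisely that the elements `φ(t q)` are left
linearly independent over `D_FN`, which gives uniqueness. For existence, conjugation by `φ(g)`
maps `φ(FN)` into itself because `N` is normal, hence preserves `D_FN`; so the elements
`α φ(g)` with `α ∈ D_FN` form a multiplicative monoid. It contains `D_FN` and additively spans
`φ(FG)`, so its additive closure is a subring containing `R`; and each `α φ(g)` lies in
`D_FN φ(t q)` for `q = gN`.
-/

/-- The division closure of a subset `s` of a division ring `D`: the smallest subring of
`D` containing `s` and closed under inverses. -/
def divClosure {D : Type*} [DivisionRing D] (s : Set D) : Subring D :=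
  sInf {S : Subring D | s ⊆ S ∧ ∀ x ∈ S, x⁻¹ ∈ S}

/-- A group is locally indicable if every nontrivial finitely generated subgroup admits
a surjection onto `ℤ`. -/
def LocallyIndicable (G : Type*) [Group G] : Prop :=
  ∀ H : Subgroup G, H ≠ ⊥ → H.FG →
    ∃ ψ : ↥H →* Multiplicative ℤ, Function.Surjective ψ

/-- The pair `(D, φ)` is a Hughes-free division ring of the group ring `FG`:
`D` is the division ring generated by `φ(FG)`, and for every nontrivial finitely
generated subgroup `H ≤ G`, every normal subgroup `N ⊴ H` with `H/N ≅ ℤ`, and all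
`h₁, …, hₙ ∈ H` in pairwise distinct cosets of `N`, the sum
`⟨φ(FN)⟩ φ(h₁) + ⋯ + ⟨φ(FN)⟩ φ(hₙ)` is direct. -/
def IsHughesFree {F G D : Type*} [DivisionRing F] [Group G] [DivisionRing D]
    (φ : MonoidAlgebra F G →+* D) : Prop :=
  divClosure (Set.range φ) = ⊤ ∧
  ∀ H : Subgroup G, H ≠ ⊥ → H.FG →
    ∀ N : Subgroup G, N ≤ H →
      (∃ ψ : ↥H →* Multiplicative ℤ, Function.Surjective ψ ∧
        ∀ x : ↥H, ψ x = 1 ↔ (x : G) ∈ N) →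
      ∀ (n : ℕ) (h : Fin n → G), (∀ i, h i ∈ H) →
        (∀ i j, i ≠ j → (h i)⁻¹ * h j ∉ N) →
        ∀ α : Fin n → D,
          (∀ i, α i ∈ divClosure
            (φ '' {p : MonoidAlgebra F G | ∀ g ∈ p.coeff.support, g ∈ N})) →
          (∑ i, α i * φ (MonoidAlgebra.of F G (h i))) = 0 →
          ∀ i, α i = 0

/-- Strong Hughes-freeness: the directness condition holds for every subgroup `H ≤ G`
and every normal subgroup `N ⊴ H`, with no finite-generation or `H/N ≅ ℤ` assumption. -/
def IsStronglyHughesFree {F G D : Type*} [DivisionRing F] [Group G] [DivisionRing D]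
    (φ : MonoidAlgebra F G →+* D) : Prop :=
  ∀ H N : Subgroup G, N ≤ H →
    (∀ h ∈ H, ∀ n ∈ N, h * n * h⁻¹ ∈ N) →
    ∀ (n : ℕ) (h : Fin n → G), (∀ i, h i ∈ H) →
      (∀ i j, i ≠ j → (h i)⁻¹ * h j ∉ N) →
      ∀ α : Fin n → D,
        (∀ i, α i ∈ divClosure
          (φ '' {p : MonoidAlgebra F G | ∀ g ∈ p.coeff.support, g ∈ N})) →
        (∑ i, α i * φ (MonoidAlgebra.of F G (h i))) = 0 →
        ∀ i, α i = 0

section DivClosure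

variable {D : Type*} [DivisionRing D]

theorem subset_divClosure (s : Set D) : s ⊆ divClosure s :=
  fun _ hx => Subring.mem_sInf.2 fun _ hS => hS.1 hx

theorem inv_mem_divClosure {s : Set D} {x : D} (hx : x ∈ divClosure s) : x⁻¹ ∈ divClosure s :=
  Subring.mem_sInf.2 fun S hS => hS.2 x (Subring.mem_sInf.1 hx S hS)

theorem divClosure_le {s : Set D} {S : Subring D} (hs : s ⊆ S) (hS : ∀ x ∈ S, x⁻¹ ∈ S) :
    divClosure s ≤ S :=
  sInf_le ⟨hs, hS⟩

theorem divClosure_mono {s s' : Set D} (h : s ⊆ s') : divClosure s ≤ divClosure s' :=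
  divClosure_le (h.trans (subset_divClosure s')) fun _ => inv_mem_divClosure

theorem map_mem_divClosure_image {E : Type*} [DivisionRing E] (f : D →+* E) {s : Set D} {x : D}
    (hx : x ∈ divClosure s) : f x ∈ divClosure (f '' s) :=
  divClosure_le (S := (divClosure (f '' s)).comap f)
    (fun y hy => subset_divClosure _ ⟨y, hy, rfl⟩)
    (fun y hy => by simpa only [Subring.mem_comap, map_inv₀] using inv_mem_divClosure hy) hx

end DivClosure

open MonoidAlgebra

section CrossedProduct

variable {F G D : Type*} [DivisionRing F] [Group G] [DivisionRing D]

/-- `D_FN` in the notation of the paper. -/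
abbrev subgroupDivClosure (φ : MonoidAlgebra F G →+* D) (N : Subgroup G) : Subring D :=
  divClosure (φ '' {p : MonoidAlgebra F G | ∀ g ∈ p.coeff.support, g ∈ N})

variable {φ : MonoidAlgebra F G →+* D} {N : Subgroup G}

theorem map_single_mem_subgroupDivClosure {g : G} (hg : g ∈ N) (c : F) :
    φ (single g c) ∈ subgroupDivClosure φ N :=
  subset_divClosure _ ⟨single g c, fun k hk => by
    rwa [Finset.mem_singleton.1 (Finsupp.support_single_subset hk)], rfl⟩

variable (φ) in
theorem map_of_inv (g : G) : φ (of F G g⁻¹) = (φ (of F G g))⁻¹ :=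
  map_inv ((φ : MonoidAlgebra F G →* D).comp (of F G)) g

variable (φ) in
theorem isUnit_map_of (g : G) : IsUnit (φ (of F G g)) :=
  (Group.isUnit g).map ((φ : MonoidAlgebra F G →* D).comp (of F G))

theorem conj_mem_subgroupDivClosure [N.Normal] (g : G) {x : D}
    (hx : x ∈ subgroupDivClosure φ N) :
    φ (of F G g) * x * (φ (of F G g))⁻¹ ∈ subgroupDivClosure φ N := by
  classical
  let c : D →+* D :=
    MulSemiringAction.toRingHom (ConjAct Dˣ) D (ConjAct.toConjAct (isUnit_map_of φ g).unit)
  have hc (y : D) : c y = φ (of F G g) * y * (φ (of F G g))⁻¹ := by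
    simp [c, ConjAct.units_smul_def, Units.val_inv_eq_inv_val]
  rw [← hc]
  refine divClosure_mono ?_ (map_mem_divClosure_image c hx)
  rintro _ ⟨_, ⟨p, hp, rfl⟩, rfl⟩
  refine ⟨of F G g * p * of F G g⁻¹, fun k hk => ?_, by rw [hc, map_mul, map_mul, map_of_inv φ]⟩
  obtain ⟨_, hk', rfl⟩ := Finset.mem_image.1 (support_coeff_mul_single_subset _ _ _ hk)
  obtain ⟨n, hn, rfl⟩ := Finset.mem_image.1 (support_coeff_single_mul_subset _ _ _ hk')
  exact ‹N.Normal›.conj_mem n (hp n hn) g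

theorem exists_mul_map_of_eq_mul_mul_map_of [N.Normal] {α β : D}
    (hα : α ∈ subgroupDivClosure φ N) (hβ : β ∈ subgroupDivClosure φ N) (g h : G) :
    ∃ γ ∈ subgroupDivClosure φ N,
      γ * φ (of F G (g * h)) = α * φ (of F G g) * (β * φ (of F G h)) := by
  refine ⟨α * (φ (of F G g) * β * (φ (of F G g))⁻¹),
    mul_mem hα (conj_mem_subgroupDivClosure g hβ), ?_⟩
  rw [map_mul (of F G), map_mul φ]
  simp only [mul_assoc, inv_mul_cancel_left₀ (isUnit_map_of φ g).ne_zero]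

theorem exists_mul_map_of_transversal_eq [N.Normal] {t : G ⧸ N → G}
    (ht : ∀ q : G ⧸ N, (QuotientGroup.mk (t q) : G ⧸ N) = q) {α : D}
    (hα : α ∈ subgroupDivClosure φ N) (g : G) :
    ∃ γ ∈ subgroupDivClosure φ N, γ * φ (of F G (t g)) = α * φ (of F G g) := by
  have hg : g * (t g)⁻¹ ∈ N := ‹N.Normal›.mem_comm (QuotientGroup.eq.1 (ht g))
  refine ⟨α * φ (of F G (g * (t g)⁻¹)), mul_mem hα (map_single_mem_subgroupDivClosure hg 1), ?_⟩
  rw [mul_assoc, ← map_mul, ← map_mul, inv_mul_cancel_right]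

variable (φ N) in
def homogeneousSubmonoid [N.Normal] : Submonoid D where
  carrier := {x | ∃ α ∈ subgroupDivClosure φ N, ∃ g : G, x = α * φ (of F G g)}
  one_mem' := ⟨1, one_mem _, 1, by rw [map_one (of F G), map_one, mul_one]⟩
  mul_mem' := by
    rintro _ _ ⟨α, hα, g, rfl⟩ ⟨β, hβ, h, rfl⟩
    obtain ⟨γ, hγ, hγeq⟩ := exists_mul_map_of_eq_mul_mul_map_of hα hβ g h
    exact ⟨γ, hγ, g * h, hγeq.symm⟩

theorem mem_homogeneousSubmonoid_of_mem [N.Normal] {α : D} (hα : α ∈ subgroupDivClosure φ N) :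
    α ∈ homogeneousSubmonoid φ N :=
  ⟨α, hα, 1, by rw [map_one (of F G), map_one, mul_one]⟩

theorem map_single_mem_homogeneousSubmonoid [N.Normal] (g : G) (c : F) :
    φ (single g c) ∈ homogeneousSubmonoid φ N := by
  refine ⟨φ (single 1 c), map_single_mem_subgroupDivClosure N.one_mem c, g, ?_⟩
  rw [← map_mul, of_apply, single_mul_single, one_mul, mul_one]

theorem closure_le_closure_homogeneousSubmonoid [N.Normal] :
    Subring.closure ((subgroupDivClosure φ N : Set D) ∪ Set.range φ) ≤
      Subring.closure (homogeneousSubmonoid φ N) := by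
  refine Subring.closure_le.2 (Set.union_subset
    (fun α hα => Subring.subset_closure (mem_homogeneousSubmonoid_of_mem hα)) ?_)
  rintro _ ⟨p, rfl⟩
  induction p using MonoidAlgebra.induction_linear with
  | zero => simp
  | add p p' hp hp' => rw [map_add]; exact add_mem hp hp'
  | single g c => exact Subring.subset_closure (map_single_mem_homogeneousSubmonoid g c)

theorem closure_homogeneousSubmonoid_subset_span [N.Normal] {t : G ⧸ N → G}
    (ht : ∀ q : G ⧸ N, (QuotientGroup.mk (t q) : G ⧸ N) = q) :
    (Subring.closure (homogeneousSubmonoid φ N : Set D) : Set D) ⊆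
      Submodule.span (subgroupDivClosure φ N) (Set.range fun q => φ (of F G (t q))) := by
  intro r hr
  rw [SetLike.mem_coe, Subring.mem_closure_iff, Submonoid.closure_eq] at hr
  refine (AddSubgroup.closure_le (K := (Submodule.span (subgroupDivClosure φ N)
    (Set.range fun q => φ (of F G (t q)))).toAddSubgroup)).2 ?_ hr
  rintro _ ⟨α, hα, g, rfl⟩
  obtain ⟨γ, hγ, hγeq⟩ := exists_mul_map_of_transversal_eq ht hα g
  rw [← hγeq]
  exact Submodule.smul_mem _ (⟨γ, hγ⟩ : subgroupDivClosure φ N)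
    (Submodule.subset_span (Set.mem_range_self _))

theorem linearIndependent_map_of_transversal (hφ : IsStronglyHughesFree φ) [N.Normal]
    {t : G ⧸ N → G} (ht : ∀ q : G ⧸ N, (QuotientGroup.mk (t q) : G ⧸ N) = q) :
    LinearIndependent (subgroupDivClosure φ N) fun q => φ (of F G (t q)) := by
  refine linearIndependent_iff_finset_linearIndependent.2 fun s => ?_
  rw [← linearIndependent_equiv s.equivFin.symm, Fintype.linearIndependent_iff]
  intro c hc i
  have hdistinct (i j : Fin s.card) (hij : i ≠ j) :
      (t (s.equivFin.symm i))⁻¹ * t (s.equivFin.symm j) ∉ N := fun hN => by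
    rw [← QuotientGroup.eq, ht, ht, ← Subtype.ext_iff, Equiv.apply_eq_iff_eq] at hN
    exact hij hN
  exact Subtype.ext (hφ ⊤ N le_top (fun g _ n hn => ‹N.Normal›.conj_mem n hn g) _ _
    (fun _ => trivial) hdistinct (fun i => c i) (fun i => (c i).2) hc i)

end CrossedProduct

theorem crossed_product_decomposition_general
    {F G D : Type*} [DivisionRing F] [Group G] [DivisionRing D]
    (φ : MonoidAlgebra F G →+* D)
    (hStrong : IsStronglyHughesFree φ)
    (N : Subgroup G) [N.Normal]
    (t : G ⧸ N → G) (ht : ∀ q : G ⧸ N, (QuotientGroup.mk (t q) : G ⧸ N) = q) :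
    let DN := divClosure (φ '' {p : MonoidAlgebra F G | ∀ g ∈ p.coeff.support, g ∈ N})
    let R₀ := Subring.closure ((DN : Subring D) ∪ Set.range φ)
    (∀ r ∈ R₀, ∃! c : (G ⧸ N) →₀ ↥DN,
        r = c.sum fun q α => (α : D) * φ (MonoidAlgebra.of F G (t q))) ∧
    (∀ q q' : G ⧸ N, ∀ α ∈ DN, ∀ β ∈ DN, ∃ γ ∈ DN,
        (α * φ (MonoidAlgebra.of F G (t q))) * (β * φ (MonoidAlgebra.of F G (t q'))) =
          γ * φ (MonoidAlgebra.of F G (t (q * q')))) ∧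
    (∀ q : G ⧸ N, φ (MonoidAlgebra.of F G (t q)) ∈ R₀ ∧
      ∃ u : D, u ∈ R₀ ∧ φ (MonoidAlgebra.of F G (t q)) * u = 1 ∧
        u * φ (MonoidAlgebra.of F G (t q)) = 1) := by
  intro DN R₀
  refine ⟨fun r hr => ?_, fun q q' α hα β hβ => ?_, fun q => ?_⟩
  · obtain ⟨c, hc⟩ := Finsupp.mem_span_range_iff_exists_finsupp.1
      (closure_homogeneousSubmonoid_subset_span ht (closure_le_closure_homogeneousSubmonoid hr))
    exact ⟨c, hc.symm, fun c' hc' => linearIndependent_map_of_transversal hStrong ht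
      (hc'.symm.trans hc.symm)⟩
  · obtain ⟨γ, hγ, hγeq⟩ := exists_mul_map_of_eq_mul_mul_map_of hα hβ (t q) (t q')
    obtain ⟨δ, hδ, hδeq⟩ := exists_mul_map_of_transversal_eq ht hγ (t q * t q')
    rw [QuotientGroup.mk_mul, ht, ht] at hδeq
    exact ⟨δ, hδ, hγeq.symm.trans hδeq.symm⟩
  · have hunit := isUnit_map_of φ (t q)
    refine ⟨Subring.subset_closure (Or.inr ⟨_, rfl⟩), φ (of F G (t q)⁻¹),
      Subring.subset_closure (Or.inr ⟨_, rfl⟩), ?_, ?_⟩ <;>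
    rw [map_of_inv φ]
    exacts [mul_inv_cancel₀ hunit.ne_zero, inv_mul_cancel₀ hunit.ne_zero]

/-- Let `G` be a locally indicable group with (strongly) Hughes-free division ring
`D_FG` and `N ⊴ G` a normal subgroup.  Then the subring `R` of `D_FG` generated by
`D_FN` and the image of `FG` is a crossed product `D_FN * (G/N)`: with respect to any
transversal `t : G/N → G` of `N` in `G`, every element of `R` is uniquely a finite sum
`∑ α_q φ(t(q))` with `α_q ∈ D_FN`, the graded pieces multiply into each other
(`D_FN φ(t q) · D_FN φ(t q') ⊆ D_FN φ(t (qq'))`), and each graded piece contains a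
unit of `R`. -/
theorem crossed_product_decomposition
    {F G D : Type*} [DivisionRing F] [Group G] [DivisionRing D]
    (φ : MonoidAlgebra F G →+* D)
    (hLI : LocallyIndicable G) (hHF : IsHughesFree φ)
    (hStrong : IsStronglyHughesFree φ)
    (N : Subgroup G) [N.Normal]
    (t : G ⧸ N → G) (ht : ∀ q : G ⧸ N, (QuotientGroup.mk (t q) : G ⧸ N) = q) :
    let DN := divClosure (φ '' {p : MonoidAlgebra F G | ∀ g ∈ p.coeff.support, g ∈ N})
    let R₀ := Subring.closure ((DN : Subring D) ∪ Set.range φ)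
    (∀ r ∈ R₀, ∃! c : (G ⧸ N) →₀ ↥DN,
        r = c.sum fun q α => (α : D) * φ (MonoidAlgebra.of F G (t q))) ∧
    (∀ q q' : G ⧸ N, ∀ α ∈ DN, ∀ β ∈ DN, ∃ γ ∈ DN,
        (α * φ (MonoidAlgebra.of F G (t q))) * (β * φ (MonoidAlgebra.of F G (t q'))) =
          γ * φ (MonoidAlgebra.of F G (t (q * q')))) ∧
    (∀ q : G ⧸ N, φ (MonoidAlgebra.of F G (t q)) ∈ R₀ ∧
      ∃ u : D, u ∈ R₀ ∧ φ (MonoidAlgebra.of F G (t q)) * u = 1 ∧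
        u * φ (MonoidAlgebra.of F G (t q)) = 1) :=
  crossed_product_decomposition_general φ hStrong N t ht
end

section
/- Let G be a locally indicable group with Hughes-free division ring D_FG and N ⊴ G a normal subgroup of finite index. Then D_FG is generated as a ring by D_FN together with the image of FG; i.e., D_FG equals the crossed product D_FN * (G/N). -/
section DivClosure

variable {D : Type*} [DivisionRing D]

theorem map_mem_divClosure {D' : Type*} [DivisionRing D'] (σ : D →+* D') {s : Set D}
    {t : Set D'} (hst : ∀ x ∈ s, σ x ∈ divClosure t) {x : D} (hx : x ∈ divClosure s) :
    σ x ∈ divClosure t :=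
  divClosure_le (S := (divClosure t).comap σ) hst
    (fun y hy => by simpa only [Subring.mem_comap, map_inv₀] using inv_mem_divClosure hy) hx

def divSubfield (s : Set D) : Subfield D :=
  { divClosure s with inv_mem' := fun _ => inv_mem_divClosure }

end DivClosure

section SubfieldSpan

variable {D : Type*} [DivisionRing D] {K : Subfield D}

theorem Subring.inv_mem_of_subset_span_finite {S : Subring D} (hKS : (K : Set D) ⊆ S)
    {t : Set D} (ht : t.Finite) (hSt : (S : Set D) ⊆ Submodule.span K t) {x : D}
    (hx : x ∈ S) : x⁻¹ ∈ S := by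
  rcases eq_or_ne x 0 with rfl | hx0
  · simpa only [inv_zero] using S.zero_mem
  let M : Submodule K D :=
    { carrier := S
      add_mem' := S.add_mem
      zero_mem' := S.zero_mem
      smul_mem' := fun k _ hm => S.mul_mem (hKS k.2) hm }
  have := FiniteDimensional.span_of_finite K ht
  have : FiniteDimensional K M :=
    Submodule.finiteDimensional_of_le (S₂ := Submodule.span K t) hSt
  let f : M →ₗ[K] M :=
    { toFun := fun m => ⟨m * x, S.mul_mem m.2 hx⟩
      map_add' := fun a b => Subtype.ext (add_mul (a : D) b x)
      map_smul' := fun k m => Subtype.ext (mul_assoc (k : D) m x) }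
  have hf : Function.Injective f := fun a b hab =>
    Subtype.ext (mul_right_cancel₀ hx0 (congrArg Subtype.val hab))
  obtain ⟨m, hm⟩ := LinearMap.injective_iff_surjective.mp hf ⟨1, S.one_mem⟩
  rw [inv_eq_of_mul_eq_one_left (congrArg Subtype.val hm)]
  exact m.2

theorem mul_mem_span_of_mem {s : Set D} {k x : D} (hk : k ∈ K) (hx : x ∈ Submodule.span K s) :
    k * x ∈ Submodule.span K s :=
  Submodule.smul_mem _ ⟨k, hk⟩ hx

variable {T : Submonoid D}

theorem mul_mem_span_of_normalizes (hnorm : ∀ t ∈ T, ∀ k ∈ K, ∃ k' ∈ K, t * k = k' * t)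
    {a b : D} (ha : a ∈ Submodule.span K (T : Set D)) (hb : b ∈ Submodule.span K (T : Set D)) :
    a * b ∈ Submodule.span K (T : Set D) := by
  induction ha using Submodule.span_induction with
  | mem t ht =>
    induction hb using Submodule.span_induction with
    | mem t' ht' => exact Submodule.subset_span (T.mul_mem ht ht')
    | zero => simpa only [mul_zero] using Submodule.zero_mem _
    | add x y _ _ hx hy => simpa only [mul_add] using Submodule.add_mem _ hx hy
    | smul k x _ hx =>
      obtain ⟨k', hk', hkk'⟩ := hnorm t ht k k.2
      have : t * (k * x) = k' * (t * x) := by rw [← mul_assoc, hkk', mul_assoc]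
      exact this ▸ mul_mem_span_of_mem hk' hx
  | zero => simpa only [zero_mul] using Submodule.zero_mem _
  | add x y _ _ hx hy => simpa only [add_mul] using Submodule.add_mem _ hx hy
  | smul k x _ hx => exact (mul_assoc (k : D) x b).symm ▸ Submodule.smul_mem _ k hx

theorem closure_subset_span_of_normalizes (hnorm : ∀ t ∈ T, ∀ k ∈ K, ∃ k' ∈ K, t * k = k' * t)
    {s : Set D} (hs : s ⊆ Submodule.span K (T : Set D)) :
    (Subring.closure s : Set D) ⊆ Submodule.span K (T : Set D) := by
  intro x hx
  induction hx using Subring.closure_induction with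
  | mem y hy => exact hs hy
  | zero => exact Submodule.zero_mem _
  | one => exact Submodule.subset_span T.one_mem
  | add y z _ _ hy hz => exact Submodule.add_mem _ hy hz
  | neg y _ hy => exact Submodule.neg_mem _ hy
  | mul y z _ _ hy hz => exact mul_mem_span_of_normalizes hnorm hy hz

end SubfieldSpan

section GroupRing

open MonoidAlgebra

variable {F G D : Type*} [Semiring F] [Group G] [DivisionRing D]
  (φ : MonoidAlgebra F G →+* D) {N : Subgroup G}

def supportedIn (N : Subgroup G) : Set (MonoidAlgebra F G) :=
  {p | ∀ g ∈ p.coeff.support, g ∈ N}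

theorem single_mem_supportedIn {g : G} (hg : g ∈ N) (c : F) :
    single g c ∈ supportedIn N := fun a ha => by
  rwa [Finset.mem_singleton.mp (Finsupp.support_single_subset ha)]

theorem of_mul_mul_of_inv_mem_supportedIn [hN : N.Normal] (g : G) {p : MonoidAlgebra F G}
    (hp : p ∈ supportedIn N) : of F G g * p * of F G g⁻¹ ∈ supportedIn N := by
  intro a ha
  rw [Finsupp.mem_support_iff, of_apply, of_apply, coeff_mul_single_apply,
    coeff_single_mul_apply, one_mul, mul_one, inv_inv] at ha
  simpa only [mul_assoc, mul_inv_cancel_left, mul_inv_cancel, mul_one] using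
    hN.conj_mem _ (hp _ (Finsupp.mem_support_iff.mpr ha)) g

noncomputable def groupHom : G →* D :=
  (φ : MonoidAlgebra F G →* D).comp (of F G)

@[simp] theorem groupHom_apply (g : G) : groupHom φ g = φ (of F G g) := rfl

/-- The division ring `D_FN` generated by `φ(FN)`. -/
def subgroupDivSubfield (N : Subgroup G) : Subfield D :=
  divSubfield (φ '' supportedIn N)

theorem map_single_one_mem_subgroupDivSubfield (c : F) :
    φ (single 1 c) ∈ subgroupDivSubfield φ N :=
  subset_divClosure _ ⟨_, single_mem_supportedIn N.one_mem c, rfl⟩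

theorem groupHom_mem_subgroupDivSubfield {g : G} (hg : g ∈ N) :
    groupHom φ g ∈ subgroupDivSubfield φ N :=
  subset_divClosure _ ⟨_, single_mem_supportedIn hg 1, rfl⟩

/-- Conjugation by `φ g` maps `φ(FN)` into itself because `N` is normal. -/
theorem groupHom_mul_mem_subgroupDivSubfield [N.Normal] (g : G) {k : D}
    (hk : k ∈ subgroupDivSubfield φ N) :
    ∃ k' ∈ subgroupDivSubfield φ N, groupHom φ g * k = k' * groupHom φ g := by
  let σ : D →+* D :=
    MulSemiringAction.toRingHom _ D (ConjAct.toConjAct ((groupHom φ).toHomUnits g))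
  have hσ : ∀ x, σ x = groupHom φ g * x * groupHom φ g⁻¹ := fun x => by
    simp only [σ, MulSemiringAction.toRingHom_apply, ConjAct.units_smul_def,
      ConjAct.ofConjAct_toConjAct, MonoidHom.coe_toHomUnits, ← map_inv]
  refine ⟨σ k, map_mem_divClosure σ ?_ hk, ?_⟩
  · rintro - ⟨p, hp, rfl⟩
    rw [hσ, groupHom_apply, groupHom_apply, ← map_mul, ← map_mul]
    exact subset_divClosure _ ⟨_, of_mul_mul_of_inv_mem_supportedIn g hp, rfl⟩
  · rw [hσ, mul_assoc, ← map_mul, inv_mul_cancel, map_one, mul_one]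

theorem subgroupDivSubfield_subset_span :
    (subgroupDivSubfield φ N : Set D) ⊆
      Submodule.span (subgroupDivSubfield φ N) (MonoidHom.mrange (groupHom φ) : Set D) :=
  fun k hk => by
    simpa only [mul_one, SetLike.mem_coe] using
      mul_mem_span_of_mem hk (Submodule.subset_span (Submonoid.one_mem _))

theorem range_subset_span_mrange_groupHom :
    Set.range φ ⊆
      Submodule.span (subgroupDivSubfield φ N) (MonoidHom.mrange (groupHom φ) : Set D) := by
  rintro - ⟨p, rfl⟩
  rw [← sum_coeff_single p, Finsupp.sum, map_sum]
  refine Submodule.sum_mem _ fun g _ => ?_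
  have : φ (single g (p.coeff g)) = φ (single 1 (p.coeff g)) * groupHom φ g := by
    rw [groupHom_apply, ← map_mul, of_apply, single_mul_single, one_mul, mul_one]
  rw [this]
  exact mul_mem_span_of_mem (map_single_one_mem_subgroupDivSubfield φ _)
    (Submodule.subset_span ⟨g, rfl⟩)

theorem span_mrange_le_span_range_out [hN : N.Normal] :
    Submodule.span (subgroupDivSubfield φ N) (MonoidHom.mrange (groupHom φ) : Set D) ≤
      Submodule.span (subgroupDivSubfield φ N) (Set.range fun q : G ⧸ N => groupHom φ q.out) := by
  refine Submodule.span_le.mpr ?_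
  rintro - ⟨g, rfl⟩
  set r := (g : G ⧸ N).out
  have hgr : g * r⁻¹ ∈ N := hN.mem_comm (QuotientGroup.eq.mp (QuotientGroup.out_eq' _))
  have : groupHom φ g = groupHom φ (g * r⁻¹) * groupHom φ r := by
    rw [← map_mul, inv_mul_cancel_right]
  rw [SetLike.mem_coe, this]
  exact mul_mem_span_of_mem (groupHom_mem_subgroupDivSubfield φ hgr)
    (Submodule.subset_span ⟨_, rfl⟩)

end GroupRing

theorem hughesFree_eq_crossedProduct_of_finiteIndex_general
    {F G D : Type*} [DivisionRing F] [Group G] [DivisionRing D]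
    (φ : MonoidAlgebra F G →+* D)
    (hHF : IsHughesFree φ)
    (N : Subgroup G) [N.Normal] [N.FiniteIndex] :
    Subring.closure
        ((divClosure (φ '' {p : MonoidAlgebra F G | ∀ g ∈ p.coeff.support, g ∈ N}) : Subring D)
            ∪ Set.range φ) = ⊤ := by
  set E := subgroupDivSubfield φ N
  set R := Subring.closure ((E : Set D) ∪ Set.range φ)
  have hER : (E : Set D) ⊆ R := fun k hk => Subring.subset_closure (Or.inl hk)
  have hRspan : (R : Set D) ⊆ Submodule.span E (Set.range fun q : G ⧸ N => groupHom φ q.out) := by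
    refine subset_trans ?_ (span_mrange_le_span_range_out φ)
    refine closure_subset_span_of_normalizes ?_ (Set.union_subset
      (subgroupDivSubfield_subset_span φ) (range_subset_span_mrange_groupHom φ))
    rintro - ⟨g, rfl⟩ k hk
    exact groupHom_mul_mem_subgroupDivSubfield φ g hk
  have hRinv : ∀ x ∈ R, x⁻¹ ∈ R := fun x hx =>
    Subring.inv_mem_of_subset_span_finite hER (Set.finite_range _) hRspan hx
  exact top_unique <|
    hHF.1 ▸ divClosure_le (fun x hx => Subring.subset_closure (Or.inr hx)) hRinv

/-- Let `G` be a locally indicable group with Hughes-free division ring `D_FG` and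
`N ⊴ G` a normal subgroup of finite index.  Then `D_FG` is generated as a ring by
`D_FN` (the division closure of `φ(FN)`) together with the image of `FG`; that is,
`D_FG` equals the crossed product `D_FN * (G/N)`. -/
theorem hughesFree_eq_crossedProduct_of_finiteIndex
    {F G D : Type*} [DivisionRing F] [Group G] [DivisionRing D]
    (φ : MonoidAlgebra F G →+* D)
    (hLI : LocallyIndicable G) (hHF : IsHughesFree φ)
    (N : Subgroup G) [N.Normal] [N.FiniteIndex] :
    Subring.closure
        ((divClosure (φ '' {p : MonoidAlgebra F G | ∀ g ∈ p.coeff.support, g ∈ N}) : Subring D)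
            ∪ Set.range φ) = ⊤ :=
  hughesFree_eq_crossedProduct_of_finiteIndex_general φ hHF N
end
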